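/- Let (π₁, π₂, π₃) be a chainable architecture of depth 3 and Aᵢ ∈ D^{πᵢ} for i = 1, 2, 3. If A₁ is left-r(π₁,π₂)-unitary and A₃ is right-r(π₂,π₃)-unitary, then ‖A₁A₂A₃‖_F = ‖A₂‖_F. -/

import Mathlib

/-- A *pattern* is a tuple `(a, b, c, d)` of (positive) natural numbers. -/
structure Pattern where
  a : ℕ
  b : ℕ
  c : ℕ
  d : ℕ

namespace Pattern

/-- The entries of a pattern are positive integers. -/
def Pos (π : Pattern) : Prop := 0 < π.a ∧ 0 < π.b ∧ 0 < π.c ∧ 0 < π.d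

/-- Number of rows `a*b*d` of a `π`-factor. -/
def rows (π : Pattern) : ℕ := π.a * π.b * π.d

/-- Number of columns `a*c*d` of a `π`-factor. -/
def cols (π : Pattern) : ℕ := π.a * π.c * π.d

/-- `r(π₁, π₂) = a₁c₁/a₂ (= b₂d₂/d₁)`. -/
def rk (π₁ π₂ : Pattern) : ℕ := π₁.a * π₁.c / π₂.a

/-- A pair of patterns is *chainable* if `a₁c₁/a₂ = b₂d₂/d₁` is a positive integer,
`a₁ ∣ a₂` and `d₂ ∣ d₁`. -/
def Chainable (π₁ π₂ : Pattern) : Prop :=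
  π₂.a ∣ π₁.a * π₁.c ∧ π₁.d ∣ π₂.b * π₂.d ∧
    π₁.a * π₁.c / π₂.a = π₂.b * π₂.d / π₁.d ∧
    0 < π₁.a * π₁.c / π₂.a ∧ π₁.a ∣ π₂.a ∧ π₂.d ∣ π₁.d

/-- `π₁ * π₂ := (a₁, b₁d₁/d₂, a₂c₂/a₁, d₂)`. -/
instance : Mul Pattern :=
  ⟨fun π₁ π₂ => ⟨π₁.a, π₁.b * π₁.d / π₂.d, π₂.a * π₂.c / π₁.a, π₂.d⟩⟩

/-- `‖π‖₀ := a*b*c*d`. -/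
def norm0 (π : Pattern) : ℕ := π.a * π.b * π.c * π.d

end Pattern

open scoped Kronecker

/-- The flattening equivalence `(Fin a × Fin b) × Fin d ≃ Fin (a*b*d)`. -/
def kron3Equiv (a b d : ℕ) : (Fin a × Fin b) × Fin d ≃ Fin (a * b * d) :=
  (finProdFinEquiv.prodCongr (Equiv.refl (Fin d))).trans finProdFinEquiv

/-- The support matrix `S_π = I_a ⊗ 1_{b×c} ⊗ I_d ∈ {0,1}^{abd × acd}`. -/
def Pattern.S (π : Pattern) : Matrix (Fin π.rows) (Fin π.cols) ℕ :=
  Matrix.reindex (kron3Equiv π.a π.b π.d) (kron3Equiv π.a π.c π.d)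
    ((1 : Matrix (Fin π.a) (Fin π.a) ℕ) ⊗ₖ
      (Matrix.of fun _ _ => (1 : ℕ) : Matrix (Fin π.b) (Fin π.c) ℕ) ⊗ₖ
      (1 : Matrix (Fin π.d) (Fin π.d) ℕ))

/-- The support matrix `S_π`, extended by zero to an `ℕ × ℕ`-indexed array. -/
def SpatN (π : Pattern) : ℕ → ℕ → ℕ := fun i j =>
  if h : i < π.rows ∧ j < π.cols then π.S ⟨i, h.1⟩ ⟨j, h.2⟩ else 0

/-- `X` is (the extension by zero of) a `π`-factor: it vanishes outside the support of `S_π`. -/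
def IsFactorN (π : Pattern) (X : ℕ → ℕ → ℂ) : Prop :=
  ∀ i j, SpatN π i j = 0 → X i j = 0

/-- Product of matrices encoded as finitely supported `ℕ × ℕ`-indexed arrays. -/
noncomputable def nmul (f g : ℕ → ℕ → ℂ) : ℕ → ℕ → ℂ := fun i j => ∑' k, f i k * g k j

/-- `nprod X k = X 0 * X 1 * ⋯ * X k`. -/
noncomputable def nprod (X : ℕ → ℕ → ℕ → ℂ) : ℕ → ℕ → ℕ → ℂ
  | 0 => X 0
  | k + 1 => nmul (nprod X k) (X (k + 1))

/-- Frobenius norm. -/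
noncomputable def nfrob (f : ℕ → ℕ → ℂ) : ℝ := Real.sqrt (∑' i, ∑' j, ‖f i j‖ ^ 2)

/-- `A` is (the extension by zero of) a matrix of size `m × n`. -/
def SuppIn (m n : ℕ) (A : ℕ → ℕ → ℂ) : Prop := ∀ i j, A i j ≠ 0 → i < m ∧ j < n

/-- A `π`-factor `X` is *left-`r`-unitary* if `r ∣ c` and `‖XY‖_F = ‖Y‖_F` for every
`π'`-factor `Y` with `(π, π')` chainable and `r(π, π') = r`. -/
def LeftRUnitary (π : Pattern) (r : ℕ) (X : ℕ → ℕ → ℂ) : Prop :=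
  r ∣ π.c ∧ ∀ π' : Pattern, π'.Pos → Pattern.Chainable π π' → Pattern.rk π π' = r →
    ∀ Y : ℕ → ℕ → ℂ, IsFactorN π' Y → nfrob (nmul X Y) = nfrob Y

/-- A `π`-factor `X` is *right-`r`-unitary* if `r ∣ b` and `‖YX‖_F = ‖Y‖_F` for every
`π'`-factor `Y` with `(π', π)` chainable and `r(π', π) = r`. -/
def RightRUnitary (π : Pattern) (r : ℕ) (X : ℕ → ℕ → ℂ) : Prop :=
  r ∣ π.b ∧ ∀ π' : Pattern, π'.Pos → Pattern.Chainable π' π → Pattern.rk π' π = r →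
    ∀ Y : ℕ → ℕ → ℂ, IsFactorN π' Y → nfrob (nmul Y X) = nfrob Y

/-!
`A₁A₂A₃ = A₁(A₂A₃)`, and `A₂A₃` is a `(π₂ * π₃)`-factor: the support of `S_{π₂} S_{π₃}` lies in
that of `S_{π₂ * π₃}`. Since `(π₁, π₂ * π₃)` is chainable with `r(π₁, π₂ * π₃) = r(π₁, π₂)`,
left-unitarity of `A₁` gives `‖A₁A₂A₃‖_F = ‖A₂A₃‖_F`, and right-unitarity of `A₃` (applied to the
pair `(π₂, π₃)`) gives `‖A₂A₃‖_F = ‖A₂‖_F`.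
-/

theorem spatN_ne_zero_iff {π : Pattern} {i j : ℕ} :
    SpatN π i j ≠ 0 ↔
      i < π.rows ∧ j < π.cols ∧ i % π.d = j % π.d ∧ i / π.d / π.b = j / π.d / π.c := by
  by_cases hb : i < π.rows ∧ j < π.cols
  · rw [SpatN, dif_pos hb]
    simp only [hb, true_and]
    simp [Pattern.S, kron3Equiv, Matrix.one_apply, finProdFinEquiv, Fin.divNat, Fin.modNat,
      Fin.ext_iff, Matrix.submatrix_apply, Matrix.kroneckerMap_apply, Pattern.rows, Pattern.cols]
  · simp only [SpatN, dif_neg hb, ne_eq, not_true_eq_false, false_iff]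
    tauto

theorem IsFactorN.apply_eq_zero_of_rows_le {π : Pattern} {X : ℕ → ℕ → ℂ} (h : IsFactorN π X)
    (i j : ℕ) (hi : π.rows ≤ i) : X i j = 0 :=
  h i j (dif_neg fun hij => hi.not_gt hij.1)

theorem IsFactorN.apply_eq_zero_of_cols_le {π : Pattern} {X : ℕ → ℕ → ℂ} (h : IsFactorN π X)
    (i j : ℕ) (hj : π.cols ≤ j) : X i j = 0 :=
  h i j (dif_neg fun hij => hj.not_gt hij.2)

theorem nmul_apply_eq_sum {f g : ℕ → ℕ → ℂ} {i j N : ℕ}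
    (h : ∀ k, N ≤ k → f i k * g k j = 0) :
    nmul f g i j = ∑ k ∈ Finset.range N, f i k * g k j :=
  tsum_eq_sum fun k hk => h k (not_lt.mp (Finset.mem_range.not.mp hk))

theorem exists_ne_zero_of_nmul_ne_zero {f g : ℕ → ℕ → ℂ} {i j : ℕ} (h : nmul f g i j ≠ 0) :
    ∃ k, f i k ≠ 0 ∧ g k j ≠ 0 := by
  by_contra! hzero
  exact h (by simp only [nmul, fun k => mul_eq_zero_of_ne_zero_imp_eq_zero (hzero k), tsum_zero])

theorem nmul_assoc {f g h : ℕ → ℕ → ℂ} {M N : ℕ}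
    (hf : ∀ i k, M ≤ k → f i k = 0) (hh : ∀ k j, N ≤ k → h k j = 0) :
    nmul (nmul f g) h = nmul f (nmul g h) := by
  funext i j
  have hfg : ∀ k, nmul f g i k = ∑ l ∈ Finset.range M, f i l * g l k :=
    fun k => nmul_apply_eq_sum fun l hl => by rw [hf i l hl, zero_mul]
  have hgh : ∀ l, nmul g h l j = ∑ k ∈ Finset.range N, g l k * h k j :=
    fun l => nmul_apply_eq_sum fun k hk => by rw [hh k j hk, mul_zero]
  rw [nmul_apply_eq_sum (N := N) fun k hk => by rw [hh k j hk, mul_zero],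
    nmul_apply_eq_sum (N := M) fun l hl => by rw [hf i l hl, zero_mul]]
  simp only [hfg, hgh, Finset.sum_mul, Finset.mul_sum, mul_assoc]
  exact Finset.sum_comm

namespace Pattern

variable {π₁ π₂ π₃ : Pattern}

theorem Chainable.cols_eq_rows (h : Chainable π₁ π₂) : π₁.cols = π₂.rows := by
  obtain ⟨ha, hd, hr, -⟩ := h
  calc π₁.a * π₁.c * π₁.d = π₂.a * (π₁.a * π₁.c / π₂.a) * π₁.d := by rw [Nat.mul_div_cancel' ha]
    _ = π₂.a * (π₁.d * (π₂.b * π₂.d / π₁.d)) := by rw [hr]; ring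
    _ = π₂.a * π₂.b * π₂.d := by rw [Nat.mul_div_cancel' hd, mul_assoc]

theorem Chainable.mul_right (h₁₂ : Chainable π₁ π₂) (h₂₃ : Chainable π₂ π₃) :
    Chainable π₁ (π₂ * π₃) := by
  obtain ⟨ha, hd, hr, hpos, hdvd_a, hdvd_d⟩ := h₁₂
  have hb : (π₂ * π₃).b * (π₂ * π₃).d = π₂.b * π₂.d :=
    Nat.div_mul_cancel (dvd_mul_of_dvd_right h₂₃.2.2.2.2.2 _)
  refine ⟨ha, ?_, ?_, hpos, hdvd_a, h₂₃.2.2.2.2.2.trans hdvd_d⟩ <;> rwa [hb]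

theorem Pos.mul (h₂ : π₂.Pos) (h₃ : π₃.Pos) (h₂₃ : Chainable π₂ π₃) : (π₂ * π₃).Pos :=
  ⟨h₂.1,
    Nat.div_pos (Nat.le_of_dvd (mul_pos h₂.2.1 h₂.2.2.2) (dvd_mul_of_dvd_right h₂₃.2.2.2.2.2 _))
      h₃.2.2.2,
    Nat.div_pos (Nat.le_of_dvd (mul_pos h₃.1 h₃.2.2.1) (dvd_mul_of_dvd_left h₂₃.2.2.2.2.1 _))
      h₂.1,
    h₃.2.2.2⟩

theorem spatN_mul_ne_zero (h₂ : π₂.Pos) (h₂₃ : Chainable π₂ π₃) {i k j : ℕ}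
    (hik : SpatN π₂ i k ≠ 0) (hkj : SpatN π₃ k j ≠ 0) : SpatN (π₂ * π₃) i j ≠ 0 := by
  obtain ⟨hi, -, hmod₂, hdiv₂⟩ := spatN_ne_zero_iff.mp hik
  obtain ⟨-, hj, hmod₃, hdiv₃⟩ := spatN_ne_zero_iff.mp hkj
  have hd : π₃.d ∣ π₂.d := h₂₃.2.2.2.2.2
  have ha : π₂.a ∣ π₃.a := h₂₃.2.2.2.2.1
  have hbd : π₂.b * π₂.d / π₃.d * π₃.d = π₂.b * π₂.d :=
    Nat.div_mul_cancel (dvd_mul_of_dvd_right hd _)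
  have hac : π₂.a * (π₃.a * π₃.c / π₂.a) = π₃.a * π₃.c :=
    Nat.mul_div_cancel' (dvd_mul_of_dvd_left ha _)
  -- both sides are the width of an `a₂`-block of the index `k`, measured in `π₂` and in `π₃`
  have hblock : π₂.d * π₂.c = π₃.d * π₃.b * (π₃.a / π₂.a) := by
    refine Nat.eq_of_mul_eq_mul_left h₂.1 ?_
    calc π₂.a * (π₂.d * π₂.c) = π₂.cols := by rw [cols]; ring
      _ = π₃.rows := h₂₃.cols_eq_rows
      _ = π₂.a * (π₃.a / π₂.a) * π₃.b * π₃.d := by rw [rows, Nat.mul_div_cancel' ha]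
      _ = π₂.a * (π₃.d * π₃.b * (π₃.a / π₂.a)) := by ring
  refine spatN_ne_zero_iff.mpr ⟨?_, ?_, ?_, ?_⟩
  · calc i < π₂.a * π₂.b * π₂.d := hi
      _ = π₂.a * (π₂.b * π₂.d / π₃.d) * π₃.d := by
          rw [mul_assoc π₂.a (π₂.b * π₂.d / π₃.d), hbd, mul_assoc]
  · calc j < π₃.a * π₃.c * π₃.d := hj
      _ = π₂.a * (π₃.a * π₃.c / π₂.a) * π₃.d := by rw [hac]
  · calc i % (π₂ * π₃).d = i % π₂.d % π₃.d := (Nat.mod_mod_of_dvd i hd).symm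
      _ = k % π₂.d % π₃.d := by rw [hmod₂]
      _ = j % π₃.d := by rw [Nat.mod_mod_of_dvd k hd, hmod₃]
  · calc i / π₃.d / (π₂.b * π₂.d / π₃.d) = i / π₂.d / π₂.b := by
          rw [Nat.div_div_eq_div_mul, mul_comm π₃.d, hbd, Nat.div_div_eq_div_mul, mul_comm π₂.d]
      _ = k / (π₂.d * π₂.c) := by rw [hdiv₂, Nat.div_div_eq_div_mul]
      _ = k / π₃.d / π₃.b / (π₃.a / π₂.a) := by
          rw [hblock, Nat.div_div_eq_div_mul, Nat.div_div_eq_div_mul, mul_assoc]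
      _ = j / π₃.d / (π₃.a * π₃.c / π₂.a) := by
          rw [hdiv₃, Nat.div_div_eq_div_mul (j / π₃.d), ← Nat.div_mul_right_comm ha, mul_comm]

end Pattern

theorem IsFactorN.nmul {π₂ π₃ : Pattern} (h₂ : π₂.Pos) (h₂₃ : Pattern.Chainable π₂ π₃)
    {A₂ A₃ : ℕ → ℕ → ℂ} (hA₂ : IsFactorN π₂ A₂) (hA₃ : IsFactorN π₃ A₃) :
    IsFactorN (π₂ * π₃) (nmul A₂ A₃) := by
  intro i j hS
  by_contra hne
  obtain ⟨k, hik, hkj⟩ := exists_ne_zero_of_nmul_ne_zero hne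
  exact Pattern.spatN_mul_ne_zero h₂ h₂₃ (mt (hA₂ i k) hik) (mt (hA₃ k j) hkj) hS

theorem unitary_sandwich_norm_general (π₁ π₂ π₃ : Pattern)
    (h₂ : π₂.Pos) (h₃ : π₃.Pos)
    (h₁₂ : Pattern.Chainable π₁ π₂) (h₂₃ : Pattern.Chainable π₂ π₃)
    (A₁ A₂ A₃ : ℕ → ℕ → ℂ)
    (hA₁ : IsFactorN π₁ A₁) (hA₂ : IsFactorN π₂ A₂) (hA₃ : IsFactorN π₃ A₃)
    (hL : LeftRUnitary π₁ (Pattern.rk π₁ π₂) A₁)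
    (hR : RightRUnitary π₃ (Pattern.rk π₂ π₃) A₃) :
    nfrob (nmul (nmul A₁ A₂) A₃) = nfrob A₂ := by
  rw [nmul_assoc hA₁.apply_eq_zero_of_cols_le hA₃.apply_eq_zero_of_rows_le,
    hL.2 (π₂ * π₃) (h₂.mul h₃ h₂₃) (h₁₂.mul_right h₂₃) rfl _ (hA₂.nmul h₂ h₂₃ hA₃)]
  exact hR.2 π₂ h₂ h₂₃ rfl A₂ hA₂

/-- **Lemma.** For a chainable architecture `(π₁, π₂, π₃)` and factors `Aᵢ ∈ D^{πᵢ}`, if `A₁`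
is left-`r(π₁,π₂)`-unitary and `A₃` is right-`r(π₂,π₃)`-unitary, then
`‖A₁A₂A₃‖_F = ‖A₂‖_F`. -/
theorem unitary_sandwich_norm (π₁ π₂ π₃ : Pattern)
    (h₁ : π₁.Pos) (h₂ : π₂.Pos) (h₃ : π₃.Pos)
    (h₁₂ : Pattern.Chainable π₁ π₂) (h₂₃ : Pattern.Chainable π₂ π₃)
    (A₁ A₂ A₃ : ℕ → ℕ → ℂ)
    (hA₁ : IsFactorN π₁ A₁) (hA₂ : IsFactorN π₂ A₂) (hA₃ : IsFactorN π₃ A₃)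
    (hL : LeftRUnitary π₁ (Pattern.rk π₁ π₂) A₁)
    (hR : RightRUnitary π₃ (Pattern.rk π₂ π₃) A₃) :
    nfrob (nmul (nmul A₁ A₂) A₃) = nfrob A₂ :=
  unitary_sandwich_norm_general π₁ π₂ π₃ h₂ h₃ h₁₂ h₂₃ A₁ A₂ A₃ hA₁ hA₂ hA₃ hL hR
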